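/- arXiv:2205.13814 — 2 statements merged into one kernel-verified Lean document; each statement's English description precedes it below -/
import Mathlib

section
/- Let φ denote the ReLU function applied entrywise. Suppose W ∈ ℝ^{m×m}, U ∈ ℝ^{m×d}, X ∈ ℝ^{d×n} satisfy ‖W‖₂ ≤ ρ̄_w < 1 and ‖U‖₂ ≤ ρ̄_u, and let Z ∈ ℝ^{m×n} be an equilibrium point, i.e. Z = φ(W Z + U X). Then ‖Z‖_F ≤ (ρ̄_u/(1 − ρ̄_w)) · ‖X‖_F. -/
open scoped BigOperators Matrix Kronecker
open MeasureTheory ProbabilityTheory Filter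

noncomputable section

/-- ReLU on reals. -/
def relu (x : ℝ) : ℝ := max x 0

/-- Entrywise ReLU on matrices. -/
def reluM {α β : Type*} (A : Matrix α β ℝ) : Matrix α β ℝ :=
  Matrix.of fun i j => relu (A i j)

/-- Frobenius norm of a matrix. -/
def frobNorm {α β : Type*} [Fintype α] [Fintype β] (A : Matrix α β ℝ) : ℝ :=
  Real.sqrt (∑ i, ∑ j, (A i j) ^ 2)

/-- Euclidean norm of a vector. -/
def euclNorm {α : Type*} [Fintype α] (v : α → ℝ) : ℝ :=
  Real.sqrt (∑ i, (v i) ^ 2)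

/-- Operator (spectral) norm of a real matrix. -/
def opNorm {α β : Type*} [Fintype α] [Fintype β] [DecidableEq β]
    (A : Matrix α β ℝ) : ℝ :=
  ‖(LinearMap.toContinuousLinearMap (Matrix.toEuclideanLin A))‖

/-- Least eigenvalue of a square matrix, as the infimum of the Rayleigh
quotient over the unit sphere. -/
def lamMin {n : ℕ} (A : Matrix (Fin n) (Fin n) ℝ) : ℝ :=
  ⨅ v : {v : Fin n → ℝ // ∑ i, (v i) ^ 2 = 1}, ∑ i, A.mulVec v.1 i * v.1 i

/-- The dual activation `Q(x) = (√(1-x²) + (π - arccos x)·x)/π` of ReLU. -/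
def Qf (x : ℝ) : ℝ := (Real.sqrt (1 - x ^ 2) + (Real.pi - Real.arccos x) * x) / Real.pi

/-- Expectation of `φ(u)·φ(v)` for `(u,v)` a centered Gaussian vector with
covariance `[[a, c], [c, b]]`, written via the representation `u = √a·g₁`,
`v = (c/√a)·g₁ + √(b - c²/a)·g₂` with `g₁, g₂` i.i.d. standard Gaussians. -/
def gaussRelu2 (a b c : ℝ) : ℝ :=
  ∫ p : ℝ × ℝ, relu (Real.sqrt a * p.1) *
      relu (c / Real.sqrt a * p.1 + Real.sqrt (b - c ^ 2 / a) * p.2)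
    ∂((gaussianReal 0 1).prod (gaussianReal 0 1))

/-- The population Gram matrices `K^{(l)}`, defined recursively from the
pairwise input correlations `c i j = xᵢᵀxⱼ/d`:  `K^{(0)} = 0` and
`K^{(l)}_{ij} = 2·E[φ(u)φ(v)]` for `(u,v) ~ N(0, Λ^{(l)}_{ij})`. -/
def popGram {n : ℕ} (sw2 : ℝ) (c : Fin n → Fin n → ℝ) : ℕ → Matrix (Fin n) (Fin n) ℝ
  | 0 => 0
  | l + 1 => Matrix.of fun i j =>
      2 * gaussRelu2 (sw2 * popGram sw2 c l i i + 1) (sw2 * popGram sw2 c l j j + 1)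
        (sw2 * popGram sw2 c l i j + c i j)

/-- The iterates `Z^{(0)} = 0`, `Z^{(l+1)} = φ(W Z^{(l)} + U X)`. -/
def Zit {m d n : ℕ} (W : Matrix (Fin m) (Fin m) ℝ) (U : Matrix (Fin m) (Fin d) ℝ)
    (X : Matrix (Fin d) (Fin n) ℝ) : ℕ → Matrix (Fin m) (Fin n) ℝ
  | 0 => 0
  | l + 1 => reluM (W * Zit W U X l + U * X)

end

/-!
Entrywise ReLU does not increase the Frobenius norm, and `‖M A‖_F ≤ ‖M‖₂ ‖A‖_F` because `M`
acts on `A` column by column. Hence an equilibrium satisfies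
`‖Z‖_F ≤ ρ̄_w ‖Z‖_F + ρ̄_u ‖X‖_F`, which can be solved for `‖Z‖_F` since `ρ̄_w < 1`.
-/

open WithLp

lemma abs_relu_le (x : ℝ) : |relu x| ≤ |x| := by
  rw [relu, abs_of_nonneg (le_max_right _ _)]
  exact max_le (le_abs_self x) (abs_nonneg x)

section FrobeniusNorm

variable {α β γ : Type*}

/-- `frobNorm A` is the norm of this `ℓ²` family of columns, on which `M * A` acts columnwise. -/
def columnsL2 (A : Matrix α β ℝ) : PiLp 2 fun _ : β => EuclideanSpace ℝ α :=
  toLp 2 fun j => toLp 2 fun i => A i j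

variable [Fintype α] [Fintype β] [Fintype γ]

lemma frobNorm_eq_norm_columnsL2 (A : Matrix α β ℝ) : frobNorm A = ‖columnsL2 A‖ := by
  rw [frobNorm, PiLp.norm_eq_of_L2, Finset.sum_comm]
  simp only [columnsL2, PiLp.toLp_apply, EuclideanSpace.norm_eq, Real.norm_eq_abs, sq_abs]
  simp_rw [Real.sq_sqrt (Finset.sum_nonneg fun _ _ => sq_nonneg _)]

lemma frobNorm_nonneg (A : Matrix α β ℝ) : 0 ≤ frobNorm A := Real.sqrt_nonneg _

lemma frobNorm_add_le (A B : Matrix α β ℝ) :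
    frobNorm (A + B) ≤ frobNorm A + frobNorm B := by
  simp only [frobNorm_eq_norm_columnsL2]
  exact norm_add_le (columnsL2 A) (columnsL2 B)

lemma frobNorm_reluM_le (A : Matrix α β ℝ) : frobNorm (reluM A) ≤ frobNorm A :=
  Real.sqrt_le_sqrt <| Finset.sum_le_sum fun i _ => Finset.sum_le_sum fun j _ =>
    sq_le_sq.2 (abs_relu_le (A i j))

variable [DecidableEq β]

lemma opNorm_nonneg (M : Matrix α β ℝ) : 0 ≤ opNorm M := norm_nonneg _

lemma norm_toLp_mulVec_le (M : Matrix α β ℝ) (v : β → ℝ) :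
    ‖(toLp 2 (M *ᵥ v) : EuclideanSpace ℝ α)‖ ≤
      opNorm M * ‖(toLp 2 v : EuclideanSpace ℝ β)‖ :=
  (LinearMap.toContinuousLinearMap (Matrix.toEuclideanLin M)).le_opNorm (toLp 2 v)

lemma frobNorm_mul_le (M : Matrix α β ℝ) (A : Matrix β γ ℝ) :
    frobNorm (M * A) ≤ opNorm M * frobNorm A := by
  simp only [frobNorm_eq_norm_columnsL2]
  rw [PiLp.norm_eq_of_L2, PiLp.norm_eq_of_L2, ← Real.sqrt_sq (opNorm_nonneg M),
    ← Real.sqrt_mul (sq_nonneg _), Finset.mul_sum]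
  refine Real.sqrt_le_sqrt (Finset.sum_le_sum fun j _ => ?_)
  rw [← mul_pow]
  exact pow_le_pow_left₀ (norm_nonneg _) (norm_toLp_mulVec_le M fun k => A k j) 2

end FrobeniusNorm

lemma frobNorm_reluM_mul_add_mul_le {α β γ δ : Type*} [Fintype α] [Fintype β] [Fintype γ]
    [Fintype δ] [DecidableEq β] [DecidableEq δ] (W : Matrix α β ℝ) (Z : Matrix β γ ℝ)
    (U : Matrix α δ ℝ) (X : Matrix δ γ ℝ) :
    frobNorm (reluM (W * Z + U * X)) ≤ opNorm W * frobNorm Z + opNorm U * frobNorm X :=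
  calc frobNorm (reluM (W * Z + U * X))
      _ ≤ frobNorm (W * Z + U * X) := frobNorm_reluM_le _
      _ ≤ frobNorm (W * Z) + frobNorm (U * X) := frobNorm_add_le _ _
      _ ≤ opNorm W * frobNorm Z + opNorm U * frobNorm X :=
        add_le_add (frobNorm_mul_le W Z) (frobNorm_mul_le U X)

/-- an equilibrium point `Z = φ(W Z + U X)` with `‖W‖₂ ≤ ρ̄_w < 1`
and `‖U‖₂ ≤ ρ̄_u` satisfies `‖Z‖_F ≤ (ρ̄_u/(1-ρ̄_w))·‖X‖_F`. -/
theorem equilibrium_frobenius_bound {m d n : ℕ}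
    (W : Matrix (Fin m) (Fin m) ℝ) (U : Matrix (Fin m) (Fin d) ℝ)
    (X : Matrix (Fin d) (Fin n) ℝ) (ρw ρu : ℝ)
    (hW : opNorm W ≤ ρw) (hρw : ρw < 1) (hU : opNorm U ≤ ρu)
    (Z : Matrix (Fin m) (Fin n) ℝ) (hZ : Z = reluM (W * Z + U * X)) :
    frobNorm Z ≤ ρu / (1 - ρw) * frobNorm X := by
  have hfixed : frobNorm Z ≤ ρw * frobNorm Z + ρu * frobNorm X :=
    calc frobNorm Z
        _ = frobNorm (reluM (W * Z + U * X)) := congrArg frobNorm hZ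
        _ ≤ opNorm W * frobNorm Z + opNorm U * frobNorm X :=
          frobNorm_reluM_mul_add_mul_le W Z U X
        _ ≤ ρw * frobNorm Z + ρu * frobNorm X := by
          gcongr <;> exact frobNorm_nonneg _
  rw [div_mul_eq_mul_div, le_div_iff₀ (sub_pos.2 hρw)]
  linarith
end

section
/- Let 0 < σ_w² < 1 and let x₁,…,xₙ ∈ ℝ^d with ‖x_i‖₂ = √d. Let K^{(l)} ∈ ℝ^{n×n} be the population Gram matrices given by K^{(l)}_{ij} = ρ^{(l)} Q(cos θ^{(l)}_{ij}) with ρ^{(l)} = (1 − σ_w^{2l})/(1 − σ_w²), cos θ^{(1)}_{ij} = x_iᵀx_j/d and cos θ^{(l)}_{ij} = (1 − 1/ρ^{(l−1)}) Q(cos θ^{(l−1)}_{ij}) + (1/ρ^{(l−1)}) x_iᵀx_j/d. Then K^{(l)} converges entrywise as l → ∞ to a matrix K whose entries satisfy K_{ij} = Q(cos θ_{ij})/(1 − σ_w²), where cos θ_{ij} ∈ [−1,1] solves cos θ_{ij} = σ_w² Q(cos θ_{ij}) + (1 − σ_w²) x_iᵀx_j/d; moreover there exists a constant C > 0 (depending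 only on σ_w) such that ‖K − K^{(l)}‖_F ≤ C n l σ_w^{2l} for all l ≥ 1. -/
open scoped BigOperators Matrix Kronecker
open MeasureTheory ProbabilityTheory Filter

/-! The correlations `cos θ^{(l)}` are iterates of `s ↦ (1 - b_l) Q(s) + b_l c` whose weights
`b_l = 1/ρ^{(l)}` tend to `1 - σ_w²` at rate `σ_w^{2l}`. Since `Q` is increasing and
`1`-Lipschitz on `[-1, 1]` with `Q(-1) = 0` and `Q(1) = 1`, the limiting equation has a
solution `cos θ` in `[-1, 1]`, and the errors `e_l = |cos θ^{(l)} - cos θ|` satisfy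
`e_{l+1} ≤ σ_w² e_l + 2 σ_w^{2l}`, so that `e_l ≤ 2 l σ_w^{2(l-1)}`. Writing
`K^{(l)} = ρ^{(l)} Q(cos θ^{(l)})` with `ρ^{(l)} = (1 - σ_w^{2l})/(1 - σ_w²)` transfers this
rate to every entry, and the Frobenius norm of an `n × n` matrix costs a factor `n`. -/

open Set Topology

lemma Qf_continuous : Continuous Qf := by
  unfold Qf
  fun_prop

lemma hasDerivAt_Qf {x : ℝ} (hx : x ∈ Ioo (-1 : ℝ) 1) :
    HasDerivAt Qf (1 - Real.arccos x / Real.pi) x := by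
  obtain ⟨hx₁, hx₂⟩ := hx
  have hpos : 0 < 1 - x ^ 2 := by nlinarith
  have hsqrt : HasDerivAt (fun y : ℝ => Real.sqrt (1 - y ^ 2))
      (-(2 * x) / (2 * Real.sqrt (1 - x ^ 2))) x := by
    simpa using ((hasDerivAt_pow 2 x).const_sub 1).sqrt hpos.ne'
  have harccos := Real.hasDerivAt_arccos hx₁.ne' hx₂.ne
  have h := (hsqrt.add (((hasDerivAt_const x Real.pi).sub harccos).mul (hasDerivAt_id x))).div_const
    Real.pi
  refine HasDerivAt.congr_deriv (f := Qf) h ?_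
  have : Real.sqrt (1 - x ^ 2) ≠ 0 := by positivity
  simp only [id, Pi.sub_apply]
  field_simp
  ring

lemma Qf_neg_one : Qf (-1) = 0 := by
  simp [Qf]

lemma Qf_one : Qf 1 = 1 := by
  simp [Qf, Real.pi_ne_zero]

/-- Mean value theorem: the derivative `1 - arccos x / π` of `Q` lies in `[0, 1]`. -/
lemma Qf_sub_mem_Icc {s t : ℝ} (hs : -1 ≤ s) (hst : s ≤ t) (ht : t ≤ 1) :
    Qf t - Qf s ∈ Icc 0 (t - s) := by
  rcases hst.eq_or_lt with rfl | hlt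
  · simp
  obtain ⟨ξ, hξ, hslope⟩ := exists_hasDerivAt_eq_slope Qf (fun y => 1 - Real.arccos y / Real.pi)
    hlt Qf_continuous.continuousOn
    fun y hy => hasDerivAt_Qf ⟨hs.trans_lt hy.1, hy.2.trans_le ht⟩
  have hderiv : 1 - Real.arccos ξ / Real.pi ∈ Icc (0 : ℝ) 1 := by
    constructor
    · rw [sub_nonneg, div_le_one Real.pi_pos]
      exact Real.arccos_le_pi ξ
    · linarith [div_nonneg (Real.arccos_nonneg ξ) Real.pi_pos.le]
  have hdiff : Qf t - Qf s = (1 - Real.arccos ξ / Real.pi) * (t - s) := by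
    rw [hslope, div_mul_cancel₀ _ (sub_pos.mpr hlt).ne']
  rw [hdiff]
  constructor <;> nlinarith [hderiv.1, hderiv.2]

lemma abs_Qf_sub_le {s t : ℝ} (hs : s ∈ Icc (-1 : ℝ) 1) (ht : t ∈ Icc (-1 : ℝ) 1) :
    |Qf s - Qf t| ≤ |s - t| := by
  rcases le_total s t with hst | hts
  · obtain ⟨h₀, h₁⟩ := Qf_sub_mem_Icc hs.1 hst ht.2
    rw [abs_sub_comm, abs_sub_comm s, abs_of_nonneg h₀, abs_of_nonneg (sub_nonneg.mpr hst)]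
    exact h₁
  · obtain ⟨h₀, h₁⟩ := Qf_sub_mem_Icc ht.1 hts hs.2
    rwa [abs_of_nonneg h₀, abs_of_nonneg (sub_nonneg.mpr hts)]

lemma Qf_mem_Icc {t : ℝ} (ht : t ∈ Icc (-1 : ℝ) 1) : Qf t ∈ Icc (0 : ℝ) 1 := by
  have hlow := (Qf_sub_mem_Icc le_rfl ht.1 ht.2).1
  have hupp := (Qf_sub_mem_Icc ht.1 ht.2 le_rfl).1
  rw [Qf_neg_one] at hlow
  rw [Qf_one] at hupp
  exact ⟨by linarith, by linarith⟩

/-- Intermediate value theorem: the residual `a Q(t) + (1 - a) c - t` is `≥ 0` at `t = -1` and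
`≤ 0` at `t = 1`. -/
lemma exists_eq_mul_Qf_add {a c : ℝ} (ha₀ : 0 ≤ a) (ha₁ : a ≤ 1) (hc : c ∈ Icc (-1 : ℝ) 1) :
    ∃ t ∈ Icc (-1 : ℝ) 1, t = a * Qf t + (1 - a) * c := by
  have hcont : ContinuousOn (fun t => a * Qf t + (1 - a) * c - t) (Icc (-1) 1) := by
    have := Qf_continuous
    fun_prop
  have hzero : (0 : ℝ) ∈ Icc (a * Qf 1 + (1 - a) * c - 1) (a * Qf (-1) + (1 - a) * c - -1) := by
    rw [Qf_one, Qf_neg_one]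
    constructor <;> nlinarith [hc.1, hc.2]
  obtain ⟨t, ht, hres⟩ := intermediate_value_Icc' (by norm_num) hcont hzero
  exact ⟨t, ht, by linarith [hres]⟩

lemma convex_comb_Qf_mem_Icc {b s c : ℝ} (hb : b ∈ Icc (0 : ℝ) 1) (hs : s ∈ Icc (-1 : ℝ) 1)
    (hc : c ∈ Icc (-1 : ℝ) 1) : (1 - b) * Qf s + b * c ∈ Icc (-1 : ℝ) 1 := by
  have hQ := Qf_mem_Icc hs
  exact convex_Icc (-1 : ℝ) 1 ⟨by linarith [hQ.1], hQ.2⟩ hc (by linarith [hb.2]) hb.1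
    (by ring)

lemma abs_sum_mul_le_euclNorm_mul {ι : Type*} [Fintype ι] (u v : ι → ℝ) :
    |∑ k, u k * v k| ≤ euclNorm u * euclNorm v := by
  have hneg := Real.sum_mul_le_sqrt_mul_sqrt Finset.univ (-u) v
  simp only [Pi.neg_apply, neg_mul, Finset.sum_neg_distrib, neg_sq] at hneg
  exact abs_le.mpr ⟨by unfold euclNorm; linarith, Real.sum_mul_le_sqrt_mul_sqrt Finset.univ u v⟩

lemma sum_mul_div_mem_Icc {ι : Type*} [Fintype ι] {u v : ι → ℝ} {r : ℝ} (hr : 0 ≤ r)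
    (hu : euclNorm u = Real.sqrt r) (hv : euclNorm v = Real.sqrt r) :
    (∑ k, u k * v k) / r ∈ Icc (-1 : ℝ) 1 := by
  have hcs := abs_sum_mul_le_euclNorm_mul u v
  rw [hu, hv, Real.mul_self_sqrt hr] at hcs
  rw [mem_Icc, ← abs_le, abs_div, abs_of_nonneg hr]
  exact div_le_one_of_le₀ hcs hr

lemma le_mul_succ_mul_pow_of_le_mul_add {e : ℕ → ℝ} {a B : ℝ} (ha : 0 ≤ a) (h₀ : e 0 ≤ B)
    (hstep : ∀ m, e (m + 1) ≤ a * e m + B * a ^ (m + 1)) (m : ℕ) :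
    e m ≤ B * (m + 1) * a ^ m := by
  induction m with
  | zero => simpa using h₀
  | succ m ih =>
    calc e (m + 1) ≤ a * (B * (m + 1) * a ^ m) + B * a ^ (m + 1) :=
          (hstep m).trans (by gcongr)
      _ = B * ((m + 1 : ℕ) + 1) * a ^ (m + 1) := by push_cast; ring

lemma div_one_sub_pow_sub_mem_Icc {a : ℝ} (ha₀ : 0 ≤ a) (ha₁ : a < 1) {l : ℕ} (hl : 1 ≤ l) :
    (1 - a) / (1 - a ^ l) - (1 - a) ∈ Icc 0 (a ^ l) := by
  have hal : a ^ l ≤ a := pow_le_of_le_one ha₀ ha₁.le (by omega)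
  have hpos : 0 < 1 - a ^ l := by linarith
  have hrepr : (1 - a) / (1 - a ^ l) - (1 - a) = (1 - a) / (1 - a ^ l) * a ^ l := by
    field_simp
    ring
  have hratio : (1 - a) / (1 - a ^ l) ≤ 1 := (div_le_one hpos).mpr (by linarith)
  rw [hrepr]
  exact ⟨by positivity, mul_le_of_le_one_left (by positivity) hratio⟩

lemma abs_convex_comb_Qf_sub_le {a b c s θ : ℝ} (ha : 0 ≤ a) (hc : c ∈ Icc (-1 : ℝ) 1)
    (hs : s ∈ Icc (-1 : ℝ) 1) (hθ : θ ∈ Icc (-1 : ℝ) 1) (hθeq : θ = a * Qf θ + (1 - a) * c) :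
    |(1 - b) * Qf s + b * c - θ| ≤ a * |s - θ| + 2 * |b - (1 - a)| := by
  have hsplit : (1 - b) * Qf s + b * c - θ = a * (Qf s - Qf θ) + (b - (1 - a)) * (c - Qf s) := by
    linear_combination -hθeq
  have hgap : |c - Qf s| ≤ 2 := by
    have hQ := Qf_mem_Icc hs
    exact abs_le.mpr ⟨by linarith [hc.1, hQ.2], by linarith [hc.2, hQ.1]⟩
  rw [hsplit]
  calc |a * (Qf s - Qf θ) + (b - (1 - a)) * (c - Qf s)|
      ≤ a * |Qf s - Qf θ| + |b - (1 - a)| * |c - Qf s| :=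
        (abs_add_le _ _).trans_eq (by rw [abs_mul, abs_mul, abs_of_nonneg ha])
    _ ≤ a * |s - θ| + |b - (1 - a)| * 2 :=
        add_le_add (mul_le_mul_of_nonneg_left (abs_Qf_sub_le hs hθ) ha)
          (mul_le_mul_of_nonneg_left hgap (abs_nonneg _))
    _ = a * |s - θ| + 2 * |b - (1 - a)| := by ring

section Iteration

variable {a c θ : ℝ} {ρ t : ℕ → ℝ}

lemma one_div_rho_eq (hρ : ∀ l, ρ l = (1 - a ^ l) / (1 - a)) (l : ℕ) :
    1 / ρ l = (1 - a) / (1 - a ^ l) := by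
  rw [hρ, one_div_div]

lemma cosIterate_mem_Icc (ha₀ : 0 ≤ a) (ha₁ : a < 1) (hc : c ∈ Icc (-1 : ℝ) 1)
    (hρ : ∀ l, ρ l = (1 - a ^ l) / (1 - a)) (ht₁ : t 1 = c)
    (htrec : ∀ l, 1 ≤ l → t (l + 1) = (1 - 1 / ρ l) * Qf (t l) + 1 / ρ l * c) (m : ℕ) :
    t (m + 1) ∈ Icc (-1 : ℝ) 1 := by
  induction m with
  | zero => rwa [ht₁]
  | succ m ih =>
    have hb := div_one_sub_pow_sub_mem_Icc ha₀ ha₁ (Nat.le_add_left 1 m)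
    have hal : a ^ (m + 1) ≤ a := pow_le_of_le_one ha₀ ha₁.le (by omega)
    rw [htrec (m + 1) (by omega), one_div_rho_eq hρ]
    exact convex_comb_Qf_mem_Icc ⟨by linarith [hb.1], by linarith [hb.2]⟩ ih hc

lemma abs_cosIterate_sub_le (ha₀ : 0 ≤ a) (ha₁ : a < 1) (hc : c ∈ Icc (-1 : ℝ) 1)
    (hθ : θ ∈ Icc (-1 : ℝ) 1) (hθeq : θ = a * Qf θ + (1 - a) * c)
    (hρ : ∀ l, ρ l = (1 - a ^ l) / (1 - a)) (ht₁ : t 1 = c)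
    (htrec : ∀ l, 1 ≤ l → t (l + 1) = (1 - 1 / ρ l) * Qf (t l) + 1 / ρ l * c) (m : ℕ) :
    |t (m + 1) - θ| ≤ 2 * (m + 1) * a ^ m := by
  refine le_mul_succ_mul_pow_of_le_mul_add (e := fun m => |t (m + 1) - θ|) ha₀ ?_ (fun m => ?_) m
  · rw [ht₁]
    exact abs_le.mpr ⟨by linarith [hc.1, hθ.2], by linarith [hc.2, hθ.1]⟩
  · have hb := div_one_sub_pow_sub_mem_Icc ha₀ ha₁ (Nat.le_add_left 1 m)
    have hts := cosIterate_mem_Icc ha₀ ha₁ hc hρ ht₁ htrec m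
    rw [htrec (m + 1) (by omega), one_div_rho_eq hρ]
    calc _ ≤ a * |t (m + 1) - θ| + 2 * |(1 - a) / (1 - a ^ (m + 1)) - (1 - a)| :=
          abs_convex_comb_Qf_sub_le ha₀ hc hts hθ hθeq
      _ ≤ a * |t (m + 1) - θ| + 2 * a ^ (m + 1) := by
          rw [abs_of_nonneg hb.1]
          gcongr
          exact hb.2

/-- In the constant `(2/a + 1)/(1 - a)`, the `2/a` absorbs the shift `a^(l-1)` in the bound on the
iterate error and the `1` the term `a^l Q` split off from `ρ l = (1 - a^l)/(1 - a)`. -/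
lemma abs_Qf_div_sub_rho_mul_le (ha₀ : 0 < a) (ha₁ : a < 1) (hc : c ∈ Icc (-1 : ℝ) 1)
    (hθ : θ ∈ Icc (-1 : ℝ) 1) (hθeq : θ = a * Qf θ + (1 - a) * c)
    (hρ : ∀ l, ρ l = (1 - a ^ l) / (1 - a)) (ht₁ : t 1 = c)
    (htrec : ∀ l, 1 ≤ l → t (l + 1) = (1 - 1 / ρ l) * Qf (t l) + 1 / ρ l * c)
    {l : ℕ} (hl : 1 ≤ l) :
    |Qf θ / (1 - a) - ρ l * Qf (t l)| ≤ (2 / a + 1) / (1 - a) * l * a ^ l := by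
  obtain ⟨m, rfl⟩ : ∃ m, l = m + 1 := ⟨l - 1, by omega⟩
  have hts := cosIterate_mem_Icc ha₀.le ha₁ hc hρ ht₁ htrec m
  have herr := abs_cosIterate_sub_le ha₀.le ha₁ hc hθ hθeq hρ ht₁ htrec m
  have hQ := Qf_mem_Icc hts
  have h1a : 0 < 1 - a := by linarith
  have hsplit : Qf θ / (1 - a) - ρ (m + 1) * Qf (t (m + 1))
      = ((Qf θ - Qf (t (m + 1))) + a ^ (m + 1) * Qf (t (m + 1))) / (1 - a) := by
    rw [hρ]
    field_simp
    ring
  rw [hsplit, abs_div, abs_of_pos h1a, div_mul_eq_mul_div, div_mul_eq_mul_div]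
  gcongr
  calc |Qf θ - Qf (t (m + 1)) + a ^ (m + 1) * Qf (t (m + 1))|
      ≤ |θ - t (m + 1)| + a ^ (m + 1) * 1 := by
        refine (abs_add_le _ _).trans (add_le_add (abs_Qf_sub_le hθ hts) ?_)
        rw [abs_of_nonneg (by positivity [hQ.1])]
        gcongr
        exact hQ.2
    _ ≤ 2 * (m + 1) * a ^ m + a ^ (m + 1) * (m + 1) := by
        rw [abs_sub_comm]
        gcongr
        linarith [(Nat.cast_nonneg m : (0 : ℝ) ≤ m)]
    _ = (2 / a + 1) * ((m + 1 : ℕ) : ℝ) * a ^ (m + 1) := by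
        field_simp
        push_cast
        ring

end Iteration

lemma frobNorm_le_of_abs_le {α β : Type*} [Fintype α] [Fintype β] {A : Matrix α β ℝ} {M : ℝ}
    (hM : 0 ≤ M) (hA : ∀ i j, |A i j| ≤ M) :
    frobNorm A ≤ Real.sqrt (Fintype.card α * Fintype.card β) * M := by
  have hsum : ∑ i, ∑ j, A i j ^ 2 ≤ ∑ _i : α, ∑ _j : β, M ^ 2 := by
    refine Finset.sum_le_sum fun i _ => Finset.sum_le_sum fun j _ => ?_
    exact sq_le_sq' (abs_le.mp (hA i j)).1 (abs_le.mp (hA i j)).2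
  calc frobNorm A ≤ Real.sqrt (∑ _i : α, ∑ _j : β, M ^ 2) := Real.sqrt_le_sqrt hsum
    _ = Real.sqrt (Fintype.card α * Fintype.card β) * M := by
        simp only [Finset.sum_const, Finset.card_univ, nsmul_eq_mul]
        rw [← mul_assoc, Real.sqrt_mul (by positivity), Real.sqrt_sq hM]

lemma tendsto_of_abs_sub_le_mul_self_mul_pow {u : ℕ → ℝ} {L C a : ℝ} (ha₀ : 0 ≤ a) (ha₁ : a < 1)
    (h : ∀ l, 1 ≤ l → |L - u l| ≤ C * l * a ^ l) : Tendsto u atTop (𝓝 L) := by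
  have hlim : Tendsto (fun l : ℕ => C * (l * a ^ l)) atTop (𝓝 0) := by
    simpa using (tendsto_self_mul_const_pow_of_lt_one ha₀ ha₁).const_mul C
  refine tendsto_iff_norm_sub_tendsto_zero.mpr (squeeze_zero_norm' ?_ hlim)
  filter_upwards [eventually_ge_atTop 1] with l hl
  rw [norm_norm, Real.norm_eq_abs, abs_sub_comm, ← mul_assoc]
  exact h l hl

noncomputable section

/-- the closed-form population Gram matrices `K^{(l)}` converge
entrywise to a matrix `K` with `K_{ij} = Q(cos θ_{ij})/(1 - σ_w²)`, where
`cos θ_{ij}` solves the fixed-point equation, and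
`‖K - K^{(l)}‖_F ≤ C n l σ_w^{2l}` for a constant `C` depending only on
`σ_w`. -/
theorem popGram_closed_form_convergence (sw2 : ℝ) (h1 : 0 < sw2) (h2 : sw2 < 1) :
    ∃ C : ℝ, 0 < C ∧
      ∀ (n d : ℕ) (x : Fin n → Fin d → ℝ), (∀ i, euclNorm (x i) = Real.sqrt d) →
      ∀ c : Fin n → Fin n → ℝ, (∀ i j, c i j = (∑ k, x i k * x j k) / d) →
      ∀ ρ : ℕ → ℝ, (∀ l, ρ l = (1 - sw2 ^ l) / (1 - sw2)) →
      ∀ ct : ℕ → Fin n → Fin n → ℝ,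
        (∀ i j, ct 1 i j = c i j) →
        (∀ l, 1 ≤ l → ∀ i j,
          ct (l + 1) i j = (1 - 1 / ρ l) * Qf (ct l i j) + 1 / ρ l * c i j) →
      ∀ Kl : ℕ → Matrix (Fin n) (Fin n) ℝ,
        (∀ l, 1 ≤ l → ∀ i j, Kl l i j = ρ l * Qf (ct l i j)) →
      ∃ (K : Matrix (Fin n) (Fin n) ℝ) (cθ : Fin n → Fin n → ℝ),
        (∀ i j, cθ i j ∈ Set.Icc (-1 : ℝ) 1 ∧
          cθ i j = sw2 * Qf (cθ i j) + (1 - sw2) * c i j ∧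
          K i j = Qf (cθ i j) / (1 - sw2)) ∧
        (∀ i j, Filter.Tendsto (fun l => Kl l i j) Filter.atTop (nhds (K i j))) ∧
        ∀ l : ℕ, 1 ≤ l → frobNorm (K - Kl l) ≤ C * n * l * sw2 ^ l := by
  have hsw2 : 0 < 1 - sw2 := by linarith
  refine ⟨(2 / sw2 + 1) / (1 - sw2), by positivity, ?_⟩
  intro n d x hx c hc ρ hρ ct hct₁ hctrec Kl hKl
  have hcI : ∀ i j, c i j ∈ Icc (-1 : ℝ) 1 := fun i j => by
    rw [hc]
    exact sum_mul_div_mem_Icc (Nat.cast_nonneg d) (hx i) (hx j)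
  choose cθ hθI hθeq using fun i j => exists_eq_mul_Qf_add h1.le h2.le (hcI i j)
  have hentry : ∀ i j l, 1 ≤ l →
      |Qf (cθ i j) / (1 - sw2) - Kl l i j| ≤ (2 / sw2 + 1) / (1 - sw2) * l * sw2 ^ l :=
    fun i j l hl => by
      rw [hKl l hl]
      exact abs_Qf_div_sub_rho_mul_le (t := fun l => ct l i j) h1 h2 (hcI i j) (hθI i j)
        (hθeq i j) hρ (hct₁ i j) (fun l hl => hctrec l hl i j) hl
  refine ⟨Matrix.of fun i j => Qf (cθ i j) / (1 - sw2), cθ, fun i j => ⟨hθI i j, hθeq i j, rfl⟩,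
    fun i j => tendsto_of_abs_sub_le_mul_self_mul_pow h1.le h2 (hentry i j), fun l hl => ?_⟩
  refine (frobNorm_le_of_abs_le (by positivity) fun i j => hentry i j l hl).trans_eq ?_
  rw [Fintype.card_fin, Real.sqrt_mul_self n.cast_nonneg]
  ring

end
end
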